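/- Let A < B, let k = 2m−1 be odd and let Ψ₀,…,Ψ_{2m−2} : [A,B] → ℝ be a Chebyshev system. If σ₁ and σ₂ are finitely supported nonnegative measures on [A,B], each supported on exactly m points including the endpoint B but not A, and ∫_A^B Ψ_i dσ₁ = ∫_A^B Ψ_i dσ₂ for all i = 0,…,2m−2, then σ₁ = σ₂. (Uniqueness of the upper principal representation for odd k.) -/

import Mathlib

/-!
The difference `σ₁ - σ₂` is a signed atomic measure carried by `s₁ ∪ s₂`, which has at most
`2m - 1` points because both supports contain `B`. Completing these points to `2m - 1` points of
`[A,B]`, the vanishing of all moments of `σ₁ - σ₂` says that the weight vector lies in the kernel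
of the matrix `(Ψ i (x j))`, which is nonsingular for a Chebyshev system. Hence all weights agree.
-/

open MeasureTheory Set

/-- A family of functions `Ψ₀, …, Ψ_{k-1}` is a Chebyshev system on `[A,B]` if for all
points `A ≤ x₀ < x₁ < ⋯ < x_{k-1} ≤ B` the matrix `(Ψ i (x j))` has positive determinant. -/
def IsChebyshevSystem (A B : ℝ) {k : ℕ} (Ψ : Fin k → ℝ → ℝ) : Prop :=
  ∀ x : Fin k → ℝ, StrictMono x → (∀ j, x j ∈ Set.Icc A B) →
    0 < (Matrix.of fun i j : Fin k => Ψ i (x j)).det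

/-- `σ` is a finitely supported nonnegative measure on `[A,B]`, supported exactly on the
finite set `s ⊆ [A,B]`, i.e. `σ = ∑_{x ∈ s} a_x δ_x` with positive finite weights. -/
def IsAtomicMeasureOn (A B : ℝ) (σ : Measure ℝ) (s : Finset ℝ) : Prop :=
  ↑s ⊆ Set.Icc A B ∧ (∀ x ∈ s, 0 < σ {x} ∧ σ {x} < ⊤) ∧
    σ = ∑ x ∈ s, σ {x} • Measure.dirac x

lemma Set.Infinite.exists_finset_superset_card_eq {α : Type*} {t : Set α} (ht : t.Infinite)
    {s : Finset α} (hst : ↑s ⊆ t) {k : ℕ} (hsk : s.card ≤ k) :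
    ∃ u : Finset α, s ⊆ u ∧ ↑u ⊆ t ∧ u.card = k := by
  classical
  obtain ⟨r, hr, hrcard⟩ := (ht.sdiff s.finite_toSet).exists_subset_card_eq (k - s.card)
  have hdisj : Disjoint s r := Finset.disjoint_left.2 fun a has har => (hr har).2 has
  refine ⟨s ∪ r, Finset.subset_union_left, ?_, ?_⟩
  · rw [Finset.coe_union]
    exact union_subset hst (hr.trans sdiff_subset)
  · rw [Finset.card_union_of_disjoint hdisj, hrcard]
    omega

namespace IsChebyshevSystem

variable {A B : ℝ} {k : ℕ} {Ψ : Fin k → ℝ → ℝ}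

lemma eq_zero_of_sum_mul_eq_zero_of_card_eq (hΨ : IsChebyshevSystem A B Ψ) {u : Finset ℝ}
    (hu : ↑u ⊆ Icc A B) (hcard : u.card = k) {c : ℝ → ℝ}
    (hc : ∀ i, ∑ y ∈ u, c y * Ψ i y = 0) : ∀ y ∈ u, c y = 0 := by
  set x := u.orderEmbOfFin hcard
  have hsum : ∀ f : ℝ → ℝ, ∑ y ∈ u, f y = ∑ j, f (x j) := fun f => by
    rw [← u.map_orderEmbOfFin_univ hcard, Finset.sum_map]
    rfl
  have hdet := hΨ x x.strictMono fun j => hu (u.orderEmbOfFin_mem hcard j)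
  have hker : (Matrix.of fun i j => Ψ i (x j)).mulVec (fun j => c (x j)) = 0 := by
    funext i
    simpa [Matrix.mulVec, dotProduct, hsum, mul_comm] using hc i
  have hzero := Matrix.eq_zero_of_mulVec_eq_zero hdet.ne' hker
  intro y hy
  obtain ⟨j, rfl⟩ : y ∈ range x := by rwa [u.range_orderEmbOfFin hcard]
  exact congrFun hzero j

lemma eq_zero_of_sum_mul_eq_zero (hΨ : IsChebyshevSystem A B Ψ) (hAB : A < B)
    {u : Finset ℝ} (hu : ↑u ⊆ Icc A B) (hcard : u.card ≤ k) {c : ℝ → ℝ}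
    (hcu : ∀ y ∉ u, c y = 0) (hc : ∀ i, ∑ y ∈ u, c y * Ψ i y = 0) : c = 0 := by
  obtain ⟨v, huv, hv, hvcard⟩ := (Icc_infinite hAB).exists_finset_superset_card_eq hu hcard
  have hsum : ∀ i, ∑ y ∈ v, c y * Ψ i y = ∑ y ∈ u, c y * Ψ i y := fun i =>
    (Finset.sum_subset huv fun y _ hy => by rw [hcu y hy, zero_mul]).symm
  have hcv := hΨ.eq_zero_of_sum_mul_eq_zero_of_card_eq hv hvcard fun i => (hsum i).trans (hc i)
  funext y
  by_cases hy : y ∈ u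
  · exact hcv y (huv hy)
  · exact hcu y hy

end IsChebyshevSystem

namespace IsAtomicMeasureOn

variable {A B : ℝ} {σ : Measure ℝ} {s : Finset ℝ}

lemma apply_eq_zero (h : IsAtomicMeasureOn A B σ s) {y : ℝ} (hy : y ∉ s) : σ {y} = 0 := by
  rw [h.2.2, Measure.finsetSum_apply]
  refine Finset.sum_eq_zero fun x hx => ?_
  simp [show x ≠ y from fun hxy => hy (hxy ▸ hx)]

lemma apply_ne_top (h : IsAtomicMeasureOn A B σ s) (y : ℝ) : σ {y} ≠ ⊤ := by
  by_cases hy : y ∈ s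
  · exact (h.2.1 y hy).2.ne
  · simp [h.apply_eq_zero hy]

lemma eq_sum_dirac_of_subset (h : IsAtomicMeasureOn A B σ s) {u : Finset ℝ} (hsu : s ⊆ u) :
    σ = ∑ y ∈ u, σ {y} • Measure.dirac y := by
  conv_lhs => rw [h.2.2]
  exact Finset.sum_subset hsu fun y _ hy => by simp [h.apply_eq_zero hy]

lemma integral_eq_sum_of_subset (h : IsAtomicMeasureOn A B σ s) {u : Finset ℝ} (hsu : s ⊆ u)
    (f : ℝ → ℝ) : ∫ x, f x ∂σ = ∑ y ∈ u, (σ {y}).toReal * f y := by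
  conv_lhs => rw [h.eq_sum_dirac_of_subset hsu]
  rw [integral_finsetSum_measure fun y _ =>
    (integrable_dirac (by simp)).smul_measure (h.apply_ne_top y)]
  simp only [integral_smul_measure, integral_dirac, smul_eq_mul]

end IsAtomicMeasureOn

theorem upper_principal_representation_unique_odd_general
    {m : ℕ} (A B : ℝ) (hAB : A < B) (Ψ : Fin (2 * m - 1) → ℝ → ℝ)
    (hCheb : IsChebyshevSystem A B Ψ)
    (σ₁ σ₂ : Measure ℝ) (s₁ s₂ : Finset ℝ)
    (h₁ : IsAtomicMeasureOn A B σ₁ s₁) (h₂ : IsAtomicMeasureOn A B σ₂ s₂)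
    (hcard₁ : s₁.card = m) (hcard₂ : s₂.card = m)
    (hB₁ : B ∈ s₁) (hB₂ : B ∈ s₂)
    (hmom : ∀ i, ∫ x, Ψ i x ∂σ₁ = ∫ x, Ψ i x ∂σ₂) :
    σ₁ = σ₂ := by
  classical
  set u := s₁ ∪ s₂
  have hu : ↑u ⊆ Icc A B := by
    rw [Finset.coe_union]
    exact union_subset h₁.1 h₂.1
  have hcard : u.card ≤ 2 * m - 1 := by
    have hsum : u.card + (s₁ ∩ s₂).card = s₁.card + s₂.card :=
      Finset.card_union_add_card_inter s₁ s₂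
    have hinter := Finset.card_pos.2 ⟨B, Finset.mem_inter.2 ⟨hB₁, hB₂⟩⟩
    omega
  set c : ℝ → ℝ := fun y => (σ₁ {y}).toReal - (σ₂ {y}).toReal
  have hcu : ∀ y ∉ u, c y = 0 := fun y hy => by
    simp only [c, h₁.apply_eq_zero (Finset.notMem_union.1 hy).1,
      h₂.apply_eq_zero (Finset.notMem_union.1 hy).2, sub_self]
  have hc : ∀ i, ∑ y ∈ u, c y * Ψ i y = 0 := fun i => by
    have hi := hmom i
    rw [h₁.integral_eq_sum_of_subset (u := u) Finset.subset_union_left,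
      h₂.integral_eq_sum_of_subset (u := u) Finset.subset_union_right] at hi
    simp only [c, sub_mul, Finset.sum_sub_distrib, hi, sub_self]
  have hweights : ∀ y, σ₁ {y} = σ₂ {y} := fun y =>
    (ENNReal.toReal_eq_toReal_iff' (h₁.apply_ne_top y) (h₂.apply_ne_top y)).1 <| sub_eq_zero.1 <|
      congrFun (hCheb.eq_zero_of_sum_mul_eq_zero hAB hu hcard hcu hc) y
  rw [h₁.eq_sum_dirac_of_subset (u := u) Finset.subset_union_left,
    h₂.eq_sum_dirac_of_subset (u := u) Finset.subset_union_right]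
  simp only [hweights]

/-- Uniqueness of the upper principal representation for odd `k = 2m - 1`: two finitely
supported nonnegative measures on `[A,B]`, each supported on exactly `m` points
including `B` but not `A`, with equal moments w.r.t. a Chebyshev system
`Ψ₀,…,Ψ_{2m-2}`, coincide. -/
theorem upper_principal_representation_unique_odd
    {m : ℕ} (hm : 1 ≤ m) (A B : ℝ) (hAB : A < B) (Ψ : Fin (2 * m - 1) → ℝ → ℝ)
    (hcont : ∀ i, ContinuousOn (Ψ i) (Set.Icc A B))
    (hCheb : IsChebyshevSystem A B Ψ)
    (σ₁ σ₂ : Measure ℝ) (s₁ s₂ : Finset ℝ)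
    (h₁ : IsAtomicMeasureOn A B σ₁ s₁) (h₂ : IsAtomicMeasureOn A B σ₂ s₂)
    (hcard₁ : s₁.card = m) (hcard₂ : s₂.card = m)
    (hB₁ : B ∈ s₁) (hA₁ : A ∉ s₁) (hB₂ : B ∈ s₂) (hA₂ : A ∉ s₂)
    (hmom : ∀ i, ∫ x, Ψ i x ∂σ₁ = ∫ x, Ψ i x ∂σ₂) :
    σ₁ = σ₂ :=
  upper_principal_representation_unique_odd_general A B hAB Ψ hCheb σ₁ σ₂ s₁ s₂ h₁ h₂ hcard₁ hcard₂
    hB₁ hB₂ hmom
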